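/- Let n ≥ 1, let a ≤ −2 be an integer with a ≡ n (mod 2), and let l be an odd integer with 1 ≤ l < n. Suppose v is a simple walk of length n with v(n) = a, v(j) ≥ 0 for 0 ≤ j < l, v(l) = −1, and v(j) > a for l ≤ j < n (so that the Vervaat image v consists of an excursion of length l above 0 shifted down at time l, followed by a first passage path from −1 to a). Then the number of simple walks w of length n with w(n) = a and V(w) = v equals exactly l. -/
import Mathlib


def SimpleBridge (n : ℕ) (a : ℤ) : Set (ℕ → ℤ) :=
  {w | w 0 = 0 ∧ (∀ j < n, |w (j + 1) - w j| = 1) ∧ w n = a ∧ ∀ j, n < j → w j = 0}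

noncomputable def tauV (n : ℕ) (w : ℕ → ℤ) : ℕ :=
  sInf {j | j ≤ n ∧ ∀ i ≤ n, w j ≤ w i}

noncomputable def vervaat (n : ℕ) (w : ℕ → ℤ) : ℕ → ℤ := fun i =>
  if i ≤ n then
    (if i ≤ n - tauV n w then w (tauV n w + i) - w (tauV n w)
     else w (tauV n w + i - n) + w n - w (tauV n w))
  else 0

/-- each Vervaat configuration consisting of an excursion of length `l`
followed by a first passage path from `-1` to `a` has exactly `l` preimages among
simple bridges of length `n` ending at `a`. -/
theorem vervaat_fiber_card (n : ℕ) (hn : 1 ≤ n) (a : ℤ) (ha : a ≤ -2)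
    (hpar : a ≡ (n : ℤ) [ZMOD 2]) (l : ℕ) (hodd : Odd l) (hl1 : 1 ≤ l) (hl2 : l < n)
    (v : ℕ → ℤ) (hv : v ∈ SimpleBridge n a)
    (hpos : ∀ j < l, 0 ≤ v j) (hvl : v l = -1)
    (hfp : ∀ j, l ≤ j → j < n → a < v j) :
    Set.ncard {w ∈ SimpleBridge n a | vervaat n w = v} = l := by
  classical
  obtain ⟨hv0, hstep, hvn, hvz⟩ := hv
  have hvgt : ∀ i < n, a < v i := by
    intro i hi
    rcases lt_or_ge i l with h | h
    · have := hpos i h; linarith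
    · exact hfp i h hi
  set W : ℕ → ℕ → ℤ := fun k j =>
    if j ≤ n - k then v (j + k) - v k
    else if j ≤ n then v (j - (n - k)) + a - v k
    else 0 with hWdef
  have hWfst : ∀ k j, j ≤ n - k → W k j = v (j + k) - v k := by
    intro k j h; simp only [hWdef]; rw [if_pos h]
  have hWsnd : ∀ k j, n - k < j → j ≤ n → W k j = v (j - (n - k)) + a - v k := by
    intro k j h1 h2; simp only [hWdef]; rw [if_neg (by omega), if_pos h2]
  have hWz : ∀ k j, n < j → W k j = 0 := by
    intro k j h; simp only [hWdef]; rw [if_neg (by omega), if_neg (by omega)]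
  have hWnk : ∀ k, k ≤ n → W k (n - k) = a - v k := by
    intro k hk
    rw [hWfst k (n - k) le_rfl, show n - k + k = n by omega, hvn]
  have hWn : ∀ k, k ≤ n → W k n = a := by
    intro k hk
    rcases Nat.eq_zero_or_pos k with h | h
    · subst h; rw [hWfst 0 n (by omega)]
      simp [hv0, hvn]
    · rw [hWsnd k n (by omega) le_rfl, show n - (n - k) = k by omega]; ring
  -- minimality facts
  have hmin : ∀ k, k < l → ∀ i ≤ n, W k (n - k) ≤ W k i := by
    intro k hk i hi
    have hkn : k ≤ n := by omega
    rw [hWnk k hkn]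
    rcases le_or_gt i (n - k) with h | h
    · rw [hWfst k i h]
      rcases lt_or_eq_of_le (show i + k ≤ n by omega) with h2 | h2
      · have := hvgt (i + k) h2; linarith
      · rw [h2, hvn]
    · rw [hWsnd k i h hi]
      have : 0 ≤ v (i - (n - k)) := hpos _ (by omega)
      linarith
  have hstrict : ∀ k, k < l → ∀ j < n - k, W k (n - k) < W k j := by
    intro k hk j hj
    have hkn : k ≤ n := by omega
    rw [hWnk k hkn, hWfst k j (le_of_lt hj)]
    have := hvgt (j + k) (by omega)
    linarith
  have htau : ∀ k, k < l → tauV n (W k) = n - k := by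
    intro k hk
    have hmem : n - k ∈ {j | j ≤ n ∧ ∀ i ≤ n, W k j ≤ W k i} :=
      ⟨by omega, hmin k hk⟩
    have h1 : tauV n (W k) ≤ n - k := Nat.sInf_le hmem
    have h2 : tauV n (W k) ∈ {j | j ≤ n ∧ ∀ i ≤ n, W k j ≤ W k i} :=
      Nat.sInf_mem ⟨_, hmem⟩
    rcases lt_or_eq_of_le h1 with h | h
    · exfalso
      have hs := hstrict k hk _ h
      have := h2.2 (n - k) (by omega)
      linarith
    · exact h
  have hbridge : ∀ k, k < l → W k ∈ SimpleBridge n a := by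
    intro k hk
    have hkn : k ≤ n := by omega
    refine ⟨?_, ?_, hWn k hkn, fun j hj => hWz k j hj⟩
    · rw [hWfst k 0 (by omega)]; simp
    · intro j hj
      rcases le_or_gt (j + 1) (n - k) with h1 | h1
      · rw [hWfst k (j + 1) h1, hWfst k j (by omega)]
        have := hstep (j + k) (by omega)
        rw [show j + 1 + k = j + k + 1 by omega]
        have e : v (j + k + 1) - v k - (v (j + k) - v k) = v (j + k + 1) - v (j + k) := by
          ring
        rw [e]; exact this
      · rcases le_or_gt j (n - k) with h2 | h2
        · have hjeq : j = n - k := by omega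
          subst hjeq
          rw [hWsnd k (n - k + 1) (by omega) (by omega), hWnk k hkn,
            show n - k + 1 - (n - k) = 1 by omega]
          have h1 := hstep 0 (by omega)
          rw [hv0] at h1
          have e : v 1 + a - v k - (a - v k) = v (0 + 1) - 0 := by norm_num
          rw [e]; exact h1
        · rw [hWsnd k (j + 1) (by omega) (by omega), hWsnd k j h2 (by omega)]
          have := hstep (j - (n - k)) (by omega)
          rw [show j + 1 - (n - k) = j - (n - k) + 1 by omega]
          have e : v (j - (n - k) + 1) + a - v k - (v (j - (n - k)) + a - v k)
              = v (j - (n - k) + 1) - v (j - (n - k)) := by ring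
          rw [e]; exact this
  have hverv : ∀ k, k < l → vervaat n (W k) = v := by
    intro k hk
    have hkn : k ≤ n := by omega
    funext i
    simp only [vervaat, htau k hk]
    rcases le_or_gt i n with hi | hi
    · rw [if_pos hi]
      have hnnk : n - (n - k) = k := by omega
      rcases le_or_gt i (n - (n - k)) with h | h
      · rw [if_pos h]
        rw [hnnk] at h
        rcases Nat.eq_zero_or_pos i with h0 | h0
        · subst h0
          simp only [Nat.add_zero]
          rw [hWnk k hkn, hv0]; ring
        · rw [hWsnd k (n - k + i) (by omega) (by omega),
            show n - k + i - (n - k) = i by omega, hWnk k hkn]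
          ring
      · rw [if_neg (not_le.mpr h)]
        rw [hnnk] at h
        rw [show n - k + i - n = i - k by omega,
          hWfst k (i - k) (by omega), show i - k + k = i by omega,
          hWn k hkn, hWnk k hkn]
        ring
    · rw [if_neg (not_le.mpr hi)]
      exact (hvz i hi).symm
  -- the fiber equals the image of `Finset.range l` under `W`
  have hset : {w ∈ SimpleBridge n a | vervaat n w = v}
      = ↑((Finset.range l).image W) := by
    ext w
    simp only [Set.mem_setOf_eq, Finset.coe_image, Finset.coe_range, Set.mem_image,
      Set.mem_Iio]
    constructor
    · rintro ⟨⟨hw0, hwstep, hwn, hwz⟩, hvw⟩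
      set τ := tauV n w with hτdef
      have hSne : {j | j ≤ n ∧ ∀ i ≤ n, w j ≤ w i}.Nonempty := by
        obtain ⟨j0, hj0, hj0min⟩ :=
          (Finset.range (n + 1)).exists_min_image w ⟨0, by simp⟩
        refine ⟨j0, ?_, fun i hi => hj0min i (Finset.mem_range.mpr (by omega))⟩
        exact Nat.lt_succ_iff.mp (Finset.mem_range.mp hj0)
      have hτmem : τ ∈ {j | j ≤ n ∧ ∀ i ≤ n, w j ≤ w i} := Nat.sInf_mem hSne
      obtain ⟨hτn, hτmin⟩ := hτmem
      have hvi : ∀ i, v i = vervaat n w i := fun i => (congrFun hvw i).symm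
      have hkl : n - τ < l := by
        by_contra hcon
        push_neg at hcon
        have hl := hvi l
        rw [vervaat] at hl
        rw [if_pos (by omega), if_pos (by omega : l ≤ n - tauV n w)] at hl
        have := hτmin (tauV n w + l) (by omega)
        rw [hvl] at hl
        linarith
      refine ⟨n - τ, hkl, ?_⟩
      have hnnτ : n - (n - τ) = τ := by omega
      -- value of v at n - τ
      have hvk : v (n - τ) = a - w τ := by
        have h := hvi (n - τ)
        rw [vervaat] at h
        rw [if_pos (by omega), if_pos (by omega : n - τ ≤ n - tauV n w)] at h
        rw [h, show tauV n w + (n - τ) = n by omega, hwn]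
      funext j
      rcases le_or_gt j (n - (n - τ)) with h1 | h1
      · rw [hWfst (n - τ) j (by omega)]
        rw [hnnτ] at h1
        rcases Nat.eq_zero_or_pos j with h0 | h0
        · subst h0
          simp only [Nat.zero_add]
          rw [hw0]; ring
        · have h := hvi (j + (n - τ))
          rw [vervaat] at h
          rw [if_pos (by omega), if_neg (by omega : ¬ j + (n - τ) ≤ n - tauV n w)] at h
          rw [show tauV n w + (j + (n - τ)) - n = j by omega, hwn] at h
          rw [h, hvk]; ring
      · rcases le_or_gt j n with h2 | h2
        · rw [hWsnd (n - τ) j h1 h2, hvk]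
          rw [hnnτ] at h1 ⊢
          have h := hvi (j - τ)
          rw [vervaat] at h
          rw [if_pos (by omega), if_pos (by omega : j - τ ≤ n - tauV n w)] at h
          rw [show tauV n w + (j - τ) = j by omega] at h
          rw [h]; ring
        · rw [hWz (n - τ) j h2, hwz j h2]
    · rintro ⟨k, hk, rfl⟩
      exact ⟨hbridge k hk, hverv k hk⟩
  rw [hset, Set.ncard_coe_finset]
  rw [Finset.card_image_of_injOn, Finset.card_range]
  intro k hk k' hk' he
  have h1 := htau k (Finset.mem_range.mp hk)
  have h2 := htau k' (Finset.mem_range.mp hk')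
  rw [he, h2] at h1
  have hkl := Finset.mem_range.mp hk
  have hkl' := Finset.mem_range.mp hk'
  omega
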